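/- arXiv:2212.05456 — 8 statements merged into one kernel-verified Lean document; each statement's English description precedes it below -/
import Mathlib

section
/- For any integer m ≥ 2, the product ∏_{j=1}^{m-1} sin((2j-1)π/(4(m-1))) equals 2^(3/2 - m). -/
/-!
With `n = m - 1` and `θₖ = (2k+1)π/(4n)`, the reflection `k ↦ n-1-k` sends `θₖ` to
`π/2 - θₖ`, so the product `P` of the `sin θₖ` equals the product of the `cos θₖ`. Hence
`P² = ∏ sin θₖ cos θₖ = 4⁻ⁿ ∏ 2 sin 2θₖ`. The numbers `e^{4iθₖ}` are the roots of `Xⁿ + 1`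
and `|1 - e^{4iθₖ}| = 2 sin 2θₖ`, so evaluating `Xⁿ + 1 = ∏ (X - e^{4iθₖ})` at `1` gives
`∏ 2 sin 2θₖ = 2`. Thus `P² = 2^{1-2n}`, and `P > 0`.
-/

open Real Finset

theorem IsPrimitiveRoot.prod_one_sub_pow_mul {R : Type*} [CommRing R] [IsDomain R] {n : ℕ}
    {ζ α a : R} (hζ : IsPrimitiveRoot ζ n) (hn : 0 < n) (e : α ^ n = a) :
    ∏ k ∈ range n, (1 - ζ ^ k * α) = 1 - a := by
  simpa [Polynomial.eval_prod] using
    congrArg (Polynomial.eval 1) (X_pow_sub_C_eq_prod hζ hn e).symm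

lemma odd_mul_pi_div_mem_Ioo {k n : ℕ} (hk : k < n) :
    (2 * k + 1) * π / (2 * n) ∈ Set.Ioo 0 π := by
  have hk' : (k : ℝ) + 1 ≤ n := by exact_mod_cast hk
  constructor
  · have : (0 : ℝ) < n := by linarith
    positivity
  · rw [div_lt_iff₀ (by linarith)]
    nlinarith [pi_pos]

lemma prod_abs_two_mul_sin_odd_mul_pi_div {n : ℕ} (hn : n ≠ 0) :
    ∏ k ∈ range n, |2 * sin ((2 * k + 1) * π / (2 * n))| = 2 := by
  have hn' : (n : ℂ) ≠ 0 := by exact_mod_cast hn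
  have hα : Complex.exp (π * Complex.I / n) ^ n = -1 := by
    rw [← Complex.exp_nat_mul, mul_div_cancel₀ _ hn', Complex.exp_pi_mul_I]
  have hprod :=
    (Complex.isPrimitiveRoot_exp n hn).prod_one_sub_pow_mul (Nat.pos_of_ne_zero hn) hα
  calc ∏ k ∈ range n, |2 * sin ((2 * k + 1) * π / (2 * n))|
      = ∏ k ∈ range n,
          ‖1 - Complex.exp (2 * π * Complex.I / n) ^ k * Complex.exp (π * Complex.I / n)‖ := by
        refine prod_congr rfl fun k _ => ?_
        have hangle : Complex.exp (2 * π * Complex.I / n) ^ k * Complex.exp (π * Complex.I / n)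
            = Complex.exp (Complex.I * ((2 * k + 1) * π / n : ℝ)) := by
          rw [← Complex.exp_nat_mul, ← Complex.exp_add]
          push_cast
          field_simp
        rw [hangle, norm_sub_rev, Complex.norm_exp_I_mul_ofReal_sub_one, Real.norm_eq_abs,
          div_div, mul_comm (n : ℝ)]
    _ = 2 := by rw [← norm_prod, hprod]; norm_num

lemma prod_two_mul_sin_odd_mul_pi_div {n : ℕ} (hn : n ≠ 0) :
    ∏ k ∈ range n, 2 * sin ((2 * k + 1) * π / (2 * n)) = 2 := by
  refine (prod_congr rfl fun k hk => ?_).trans (prod_abs_two_mul_sin_odd_mul_pi_div hn)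
  obtain ⟨h0, hπ⟩ := odd_mul_pi_div_mem_Ioo (mem_range.mp hk)
  have := sin_pos_of_pos_of_lt_pi h0 hπ
  rw [abs_of_pos (by positivity)]

lemma sin_odd_mul_pi_div_four_pos {k n : ℕ} (hk : k < n) :
    0 < sin ((2 * k + 1) * π / (4 * n)) := by
  obtain ⟨h0, hπ⟩ := odd_mul_pi_div_mem_Ioo hk
  rw [show (2 * k + 1) * π / (4 * n) = (2 * k + 1) * π / (2 * n) / 2 by ring]
  exact sin_pos_of_pos_of_lt_pi (by linarith) (by linarith)

lemma prod_cos_odd_mul_pi_div_four (n : ℕ) :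
    ∏ k ∈ range n, cos ((2 * k + 1) * π / (4 * n)) =
      ∏ k ∈ range n, sin ((2 * k + 1) * π / (4 * n)) := by
  rw [← prod_range_reflect]
  refine prod_congr rfl fun k hk => ?_
  have hk : k + 1 ≤ n := mem_range.mp hk
  have hn : (n : ℝ) ≠ 0 := by norm_cast; omega
  rw [← sin_pi_div_two_sub, Nat.cast_sub (by omega), Nat.cast_sub (by omega)]
  congr 1
  field_simp
  ring

lemma prod_sin_odd_mul_pi_div_four_sq {n : ℕ} (hn : n ≠ 0) :
    (∏ k ∈ range n, sin ((2 * k + 1) * π / (4 * n))) ^ 2 = 2 / 4 ^ n := by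
  calc (∏ k ∈ range n, sin ((2 * k + 1) * π / (4 * n))) ^ 2
      = ∏ k ∈ range n, sin ((2 * k + 1) * π / (4 * n)) * cos ((2 * k + 1) * π / (4 * n)) := by
        rw [prod_mul_distrib, prod_cos_odd_mul_pi_div_four, sq]
    _ = ∏ k ∈ range n, (2 * sin ((2 * k + 1) * π / (2 * n))) / 4 := by
        refine prod_congr rfl fun k _ => ?_
        rw [show (2 * k + 1) * π / (2 * n) = 2 * ((2 * k + 1) * π / (4 * n)) by field_simp; ring,
          sin_two_mul]
        ring
    _ = 2 / 4 ^ n := by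
        rw [prod_div_distrib, prod_two_mul_sin_odd_mul_pi_div hn, prod_const, card_range]

lemma prod_sin_odd_mul_pi_div_four {n : ℕ} (hn : n ≠ 0) :
    ∏ k ∈ range n, sin ((2 * k + 1) * π / (4 * n)) = 2 ^ ((1 : ℝ) / 2 - n) := by
  have hP : 0 ≤ ∏ k ∈ range n, sin ((2 * k + 1) * π / (4 * n)) :=
    prod_nonneg fun k hk => (sin_odd_mul_pi_div_four_pos (mem_range.mp hk)).le
  have hpow : ((2 : ℝ) ^ ((1 : ℝ) / 2 - n)) ^ 2 = 2 / 4 ^ n := by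
    rw [← rpow_mul_natCast zero_le_two,
      show ((1 : ℝ) / 2 - n) * (2 : ℕ) = 1 - 2 * n by push_cast; ring,
      rpow_sub two_pos, rpow_one, rpow_mul zero_le_two, rpow_natCast]
    norm_num
  rw [← sq_eq_sq₀ hP (by positivity), prod_sin_odd_mul_pi_div_four_sq hn, hpow]

theorem stmt0 (m : ℕ) (hm : 2 ≤ m) :
    ∏ j ∈ Finset.Icc 1 (m - 1),
      Real.sin ((2 * (j : ℝ) - 1) * Real.pi / (4 * ((m : ℝ) - 1)))
      = (2 : ℝ) ^ ((3 : ℝ) / 2 - (m : ℝ)) := by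
  obtain ⟨n, rfl⟩ : ∃ n, m = n + 1 := ⟨m - 1, by omega⟩
  rw [Nat.add_sub_cancel, ← Finset.Ico_add_one_right_eq_Icc, prod_Ico_eq_prod_range,
    Nat.add_sub_cancel]
  convert prod_sin_odd_mul_pi_div_four (n := n) (by omega) using 2
  · push_cast
    congr 1
    ring
  · push_cast
    ring
end

section
/- Let G be a graph on n vertices with adjacency matrix A, and let φ(x) = xⁿ + c₁x^{n-1} + ⋯ + c_{n-1}x + c_n be the characteristic polynomial of A. Then for every odd index i ∈ {1, ..., n}, the coefficient c_i is even. -/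
/-!
Reduce modulo 2 and expand `det (X - A)` over permutations. Since `A` is symmetric, the terms of
`σ` and `σ⁻¹` coincide, so in characteristic 2 all terms with `σ ≠ σ⁻¹` cancel in pairs. Since the
diagonal of `A` vanishes, the term of an involution `σ` is a constant times `X ^ k`, where `k` is
the number of fixed points of `σ`; its moved points come in pairs, so `k ≡ n (mod 2)` and the term
contributes nothing to the coefficient of `X ^ (n - i)` for odd `i`.
-/

open Polynomial Finset Equiv

namespace Matrix

variable {ι R : Type*} [Fintype ι] [DecidableEq ι] [CommRing R]

lemma prod_charmatrix_perm_inv {A : Matrix ι ι R} (hA : A.IsSymm) (σ : Perm ι) :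
    ∏ j, charmatrix A (σ⁻¹ j) j = ∏ j, charmatrix A (σ j) j := by
  rw [← Equiv.prod_comp σ]
  refine prod_congr rfl fun j _ => ?_
  rw [show σ⁻¹ (σ j) = j from σ.symm_apply_apply j, ← transpose_apply (charmatrix A),
    ← charmatrix_transpose, hA.eq]

lemma prod_charmatrix_perm_of_diag_eq_zero {A : Matrix ι ι R} (hA : A.diag = 0) (σ : Perm ι) :
    ∏ j, charmatrix A (σ j) j = C (∏ j ∈ σ.support, -A (σ j) j) * X ^ #σ.supportᶜ := by
  rw [← prod_mul_prod_compl σ.support, map_prod]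
  congr 1
  · refine prod_congr rfl fun j hj => ?_
    rw [charmatrix_apply_ne _ _ _ (Perm.mem_support.mp hj), map_neg]
  · refine prod_eq_pow_card fun j hj => ?_
    rw [Perm.notMem_support.mp (mem_compl.mp hj), charmatrix_apply_eq,
      show A j j = 0 from congr_fun hA j, map_zero, sub_zero]

lemma coeff_prod_charmatrix_involution_eq_zero {A : Matrix ι ι R} (hA : A.diag = 0)
    {σ : Perm ι} (hσ : σ ^ 2 = 1) {i : ℕ} (hi : i ≤ Fintype.card ι) (hodd : Odd i) :
    (∏ j, charmatrix A (σ j) j).coeff (Fintype.card ι - i) = 0 := by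
  have hcard : #σ.support + #σ.supportᶜ = Fintype.card ι := card_add_card_compl _
  obtain ⟨k, hk⟩ := Perm.two_dvd_card_support hσ
  obtain ⟨m, rfl⟩ := hodd
  rw [prod_charmatrix_perm_of_diag_eq_zero hA, coeff_C_mul_X_pow, if_neg (by omega)]

theorem charpoly_coeff_card_sub_odd_eq_zero [CharP R 2] {A : Matrix ι ι R} (hsymm : A.IsSymm)
    (hdiag : A.diag = 0) {i : ℕ} (hi : i ≤ Fintype.card ι) (hodd : Odd i) :
    A.charpoly.coeff (Fintype.card ι - i) = 0 := by
  rw [charpoly, det_apply, finsetSum_coeff]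
  refine sum_ninvolution (fun σ => σ⁻¹) (fun σ => ?_) (fun σ hσ hinv => hσ ?_)
    (fun _ => mem_univ _) inv_inv
  · rw [Perm.sign_inv, prod_charmatrix_perm_inv hsymm, CharTwo.add_self_eq_zero]
  · have hσ : σ ^ 2 = 1 := by rw [sq, ← inv_mul_cancel σ, hinv]
    rw [Units.smul_def, coeff_smul, coeff_prod_charmatrix_involution_eq_zero hdiag hσ hi hodd,
      smul_zero]

end Matrix

theorem stmt4_general (n : ℕ) (G : SimpleGraph (Fin n)) [DecidableRel G.Adj] (i : ℕ)
    (h2 : i ≤ n) (hodd : Odd i) :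
    (2 : ℤ) ∣ (Matrix.charpoly (G.adjMatrix ℤ)).coeff (n - i) := by
  let f := Int.castRingHom (ZMod 2)
  have hsymm : ((G.adjMatrix ℤ).map f).IsSymm := G.isSymm_adjMatrix.map f
  have hdiag : ((G.adjMatrix ℤ).map f).diag = 0 := by
    ext j
    simp
  have h := Matrix.charpoly_coeff_card_sub_odd_eq_zero hsymm hdiag
    (h2.trans_eq (Fintype.card_fin n).symm) hodd
  rw [Matrix.charpoly_map, coeff_map, Fintype.card_fin] at h
  exact (ZMod.intCast_zmod_eq_zero_iff_dvd _ 2).mp h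

theorem stmt4 (n : ℕ) (G : SimpleGraph (Fin n)) [DecidableRel G.Adj] (i : ℕ)
    (h1 : 1 ≤ i) (h2 : i ≤ n) (hodd : Odd i) :
    (2 : ℤ) ∣ (Matrix.charpoly (G.adjMatrix ℤ)).coeff (n - i) :=
  stmt4_general n G i h2 hodd
end

section
/- Let n be even and let φ_n(x) be the characteristic polynomial of the adjacency matrix of the Dynkin graph D_n. Then over 𝔽₂, x = 0 is a root of φ_n of multiplicity exactly 2; that is, x² divides φ_n(x) mod 2 but x³ does not. -/
open Polynomial

/-- Adjacency matrix of the Dynkin graph `D n`: vertices `v₁,…,vₙ` (0-indexed `0,…,n-1`),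
where `v₁` and `v₂` are both adjacent to `v₃` and `v₃v₄⋯vₙ` is a path. -/
def dynkinAdj (R : Type*) [Zero R] [One R] (n : ℕ) : Matrix (Fin n) (Fin n) R :=
  Matrix.of fun i j =>
    if ((i.val + 1 = j.val ∧ 1 ≤ i.val) ∨ (j.val + 1 = i.val ∧ 1 ≤ j.val))
        ∨ (i.val = 0 ∧ j.val = 2) ∨ (j.val = 0 ∧ i.val = 2) then 1 else 0

namespace DynkinAux

lemma sum_two {M : Type*} [AddCommMonoid M] {n : ℕ} (f : Fin n → M) (a b : Fin n)
    (hab : a ≠ b) (h : ∀ c, c ≠ a → c ≠ b → f c = 0) : ∑ j, f j = f a + f b := by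
  rw [← Finset.sum_subset (Finset.subset_univ ({a, b} : Finset (Fin n)))
    (fun c _ hc => by
      simp only [Finset.mem_insert, Finset.mem_singleton, not_or] at hc
      exact h c hc.1 hc.2)]
  exact Finset.sum_pair hab

lemma dynkin_submatrix {n k : ℕ} (f g : Fin k → Fin n) (hf : ∀ i, ((f i : ℕ)) = i)
    (hg : ∀ j, ((g j : ℕ)) = j) :
    (Matrix.charmatrix (dynkinAdj (ZMod 2) n)).submatrix f g
      = Matrix.charmatrix (dynkinAdj (ZMod 2) k) := by
  ext i j
  rw [Matrix.submatrix_apply, Matrix.charmatrix_apply, Matrix.charmatrix_apply]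
  have h1 : dynkinAdj (ZMod 2) n (f i) (g j) = dynkinAdj (ZMod 2) k i j := by
    simp only [dynkinAdj, Matrix.of_apply, hf, hg]
  have h2 : (Matrix.diagonal fun _ : Fin n => (X : (ZMod 2)[X])) (f i) (g j)
      = (Matrix.diagonal fun _ : Fin k => (X : (ZMod 2)[X])) i j := by
    simp [Matrix.diagonal_apply, Fin.ext_iff, hf, hg]
  rw [h1, h2]

lemma det_rec (k : ℕ) (hk : 2 ≤ k) :
    (Matrix.charmatrix (dynkinAdj (ZMod 2) (k+2))).det =
      X * (Matrix.charmatrix (dynkinAdj (ZMod 2) (k+1))).det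
        + (Matrix.charmatrix (dynkinAdj (ZMod 2) k)).det := by
  set A := Matrix.charmatrix (dynkinAdj (ZMod 2) (k+2)) with hA
  set a : Fin (k+2) := Fin.last (k+1) with ha
  set b : Fin (k+2) := ⟨k, by omega⟩ with hb
  have hav : (a : ℕ) = k + 1 := rfl
  have hbv : (b : ℕ) = k := rfl
  have hab : a ≠ b := by
    simp only [ne_eq, Fin.ext_iff, hav, hbv]
    omega
  rw [Matrix.det_succ_row A a, sum_two _ a b hab ?_]
  · -- compute the two terms
    have hAaa : A a a = X := by
      rw [hA, Matrix.charmatrix_apply_eq]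
      have h0 : dynkinAdj (ZMod 2) (k+2) a a = 0 := by
        simp only [dynkinAdj, Matrix.of_apply]
        rw [if_neg]
        simp only [hav]
        omega
      rw [h0, map_zero, sub_zero]
    have hAab : A a b = 1 := by
      rw [hA, Matrix.charmatrix_apply_ne _ _ _ hab]
      have h1 : dynkinAdj (ZMod 2) (k+2) a b = 1 := by
        simp only [dynkinAdj, Matrix.of_apply]
        rw [if_pos (Or.inl (Or.inr ⟨rfl, show (1:ℕ) ≤ k by omega⟩))]
      rw [h1, map_one, CharTwo.neg_eq]
    have hsub1 : A.submatrix a.succAbove a.succAbove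
        = Matrix.charmatrix (dynkinAdj (ZMod 2) (k+1)) := by
      rw [ha, Fin.succAbove_last]
      exact dynkin_submatrix _ _ (fun i => by simp) (fun j => by simp)
    have hcol : b.succAbove (Fin.last k) = a := by
      rw [Fin.succAbove_of_le_castSucc, Fin.succ_last, ha]
      rw [Fin.le_def]
      exact le_rfl
    have hsub2 : (A.submatrix a.succAbove b.succAbove).det
        = (Matrix.charmatrix (dynkinAdj (ZMod 2) k)).det := by
      rw [ha, Fin.succAbove_last]
      set N := A.submatrix Fin.castSucc b.succAbove with hN
      have hrow : ∀ i : Fin (k+1), i ≠ Fin.last k → N i (Fin.last k) = 0 := by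
        intro i hi
        rw [hN, Matrix.submatrix_apply, hcol]
        have hne : Fin.castSucc i ≠ a := by
          simp only [ne_eq, Fin.ext_iff, Fin.coe_castSucc, hav]
          omega
        rw [hA, Matrix.charmatrix_apply_ne _ _ _ hne]
        have h0 : dynkinAdj (ZMod 2) (k+2) (Fin.castSucc i) a = 0 := by
          have hik : (i : ℕ) ≠ k := fun h => hi (Fin.ext h)
          have hil := i.isLt
          simp only [dynkinAdj, Matrix.of_apply]
          rw [if_neg]
          simp only [hav, Fin.coe_castSucc]
          omega
        rw [h0, map_zero, neg_zero]
      have hentry : N (Fin.last k) (Fin.last k) = 1 := by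
        rw [hN, Matrix.submatrix_apply, hcol]
        have hne : Fin.castSucc (Fin.last k) ≠ a := by
          simp only [ne_eq, Fin.ext_iff, Fin.coe_castSucc, Fin.val_last, hav]
          omega
        rw [hA, Matrix.charmatrix_apply_ne _ _ _ hne]
        have h1 : dynkinAdj (ZMod 2) (k+2) (Fin.castSucc (Fin.last k)) a = 1 := by
          simp only [dynkinAdj, Matrix.of_apply]
          rw [if_pos (Or.inl (Or.inl ⟨rfl, show (1:ℕ) ≤ k by omega⟩))]
        rw [h1, map_one, CharTwo.neg_eq]
      have hsub3 : N.submatrix (Fin.last k).succAbove (Fin.last k).succAbove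
          = Matrix.charmatrix (dynkinAdj (ZMod 2) k) := by
        rw [Fin.succAbove_last, hN, Matrix.submatrix_submatrix]
        refine dynkin_submatrix _ _ (fun i => by simp) (fun j => ?_)
        show ((b.succAbove (Fin.castSucc j)) : ℕ) = j
        rw [Fin.succAbove_of_castSucc_lt]
        · simp
        · rw [Fin.lt_def]
          exact j.isLt
      rw [Matrix.det_succ_column N (Fin.last k),
        Fintype.sum_eq_single (Fin.last k) (fun i hi => by rw [hrow i hi]; ring),
        hentry, hsub3]
      simp [CharTwo.neg_eq]
    rw [hAaa, hAab, hsub1, hsub2]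
    simp [CharTwo.neg_eq]
  · intro c hca hcb
    have h1 : a ≠ c := fun h => hca h.symm
    have hzero : dynkinAdj (ZMod 2) (k+2) a c = 0 := by
      have hc1 : (c : ℕ) ≠ k+1 := fun h => hca (Fin.ext (by rw [h, hav]))
      have hc2 : (c : ℕ) ≠ k := fun h => hcb (Fin.ext (by rw [h, hbv]))
      have hcl := c.isLt
      simp only [dynkinAdj, Matrix.of_apply]
      rw [if_neg]
      simp only [hav]
      omega
    rw [hA, Matrix.charmatrix_apply_ne _ _ _ h1, hzero]
    simp

noncomputable def pfib : ℕ → (ZMod 2)[X]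
  | 0 => 1
  | 1 => X
  | (k+2) => X * pfib (k+1) + pfib k

lemma pfib_coeff_zero : ∀ k, (pfib k).coeff 0 = if Even k then 1 else 0
  | 0 => by simp [pfib]
  | 1 => by simp [pfib]
  | (k+2) => by
    rw [pfib, coeff_add, mul_coeff_zero, coeff_X_zero, zero_mul, zero_add,
      pfib_coeff_zero k]
    congr 1
    simp [Nat.even_add_one, Nat.even_add]

lemma base2 : (dynkinAdj (ZMod 2) 2).charpoly = X ^ 2 * pfib 0 := by
  rw [Matrix.charpoly]
  rw [Matrix.det_fin_two]
  simp [Matrix.charmatrix_apply, Matrix.diagonal_apply, dynkinAdj, pfib]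
  ring

lemma base3 : (dynkinAdj (ZMod 2) 3).charpoly = X ^ 2 * pfib 1 := by
  rw [Matrix.charpoly]
  rw [Matrix.det_fin_three]
  simp [Matrix.charmatrix_apply, Matrix.diagonal_apply, dynkinAdj, pfib]
  have h2 : (2 : (ZMod 2)[X]) * X = 0 := by
    have : (2 : (ZMod 2)[X]) = 0 := CharTwo.two_eq_zero
    rw [this, zero_mul]
  rw [sub_sub, ← two_mul, h2, sub_zero]
  ring

lemma charpoly_eq : ∀ n, 2 ≤ n → (dynkinAdj (ZMod 2) n).charpoly = X ^ 2 * pfib (n-2) := by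
  intro n
  induction n using Nat.strong_induction_on with
  | _ n ih =>
    match n with
    | 0 => exact fun h => by omega
    | 1 => exact fun h => by omega
    | 2 => exact fun _ => base2
    | 3 => exact fun _ => base3
    | (j+4) => 
      intro _
      have h1 := ih (j+3) (by omega) (by omega)
      have h2 := ih (j+2) (by omega) (by omega)
      have h3 := det_rec (j+2) (by omega)
      rw [Matrix.charpoly] at h1 h2 ⊢
      rw [show (j+4) - 2 = j + 2 from rfl, show (j+3) - 2 = j + 1 from rfl,
        show (j+2) - 2 = j from rfl] at *
      rw [h3, h1, h2, pfib]
      ring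

end DynkinAux

theorem stmt5 (n : ℕ) (hn : 4 ≤ n) (he : Even n) :
    (X : (ZMod 2)[X]) ^ 2 ∣ (Matrix.charpoly (dynkinAdj ℤ n)).map (Int.castRingHom (ZMod 2))
    ∧ ¬ (X : (ZMod 2)[X]) ^ 3 ∣ (Matrix.charpoly (dynkinAdj ℤ n)).map (Int.castRingHom (ZMod 2)) := by
  have hmap : (Matrix.charpoly (dynkinAdj ℤ n)).map (Int.castRingHom (ZMod 2))
      = (dynkinAdj (ZMod 2) n).charpoly := by
    rw [← Matrix.charpoly_map]
    congr 1
    ext i j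
    simp [dynkinAdj, Matrix.map_apply, apply_ite (Int.castRingHom (ZMod 2))]
  rw [hmap, DynkinAux.charpoly_eq n (by omega)]
  have hev : Even (n-2) := (Nat.even_sub (by omega)).mpr (by simp [he])
  constructor
  · exact dvd_mul_right _ _
  · intro hdvd
    rw [pow_succ] at hdvd
    have hx : (X : (ZMod 2)[X]) ∣ DynkinAux.pfib (n-2) :=
      (mul_dvd_mul_iff_left (pow_ne_zero 2 (X_ne_zero))).mp hdvd
    rw [X_dvd_iff, DynkinAux.pfib_coeff_zero, if_pos hev] at hx
    exact one_ne_zero hx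
end

section
/- Let n ≡ 0 (mod 4), let A be the adjacency matrix of the Dynkin graph D_n over 𝔽₂, and let α = (1,1,0,…,0)ᵀ and β = (0,1,0,1,0,1,…,0,1)ᵀ (β has 1 in position 2 and in all even positions from 4 to n). Then over 𝔽₂ one has Ker(A²) = Ker(A) = span{α, β}, a 2-dimensional subspace. -/
open Matrix

namespace DynkinAux

variable {n : ℕ}

/-- The vector α. -/
def av (n : ℕ) : Fin n → ZMod 2 := fun i => if i.val ≤ 1 then 1 else 0

/-- The vector β. -/
def bv (n : ℕ) : Fin n → ZMod 2 := fun i => if i.val % 2 = 1 then 1 else 0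

lemma adj_symm : (dynkinAdj (ZMod 2) n)ᵀ = dynkinAdj (ZMod 2) n := by
  ext i j
  simp only [dynkinAdj, transpose_apply, Matrix.of_apply]
  congr 1
  simp only [eq_iff_iff]
  tauto

lemma mv_eq (x : Fin n → ZMod 2) (i : Fin n) :
    (dynkinAdj (ZMod 2) n).mulVec x i
      = ∑ j, (if ((i.val + 1 = j.val ∧ 1 ≤ i.val) ∨ (j.val + 1 = i.val ∧ 1 ≤ j.val))
        ∨ (i.val = 0 ∧ j.val = 2) ∨ (j.val = 0 ∧ i.val = 2) then x j else 0) := by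
  simp only [Matrix.mulVec, dotProduct, dynkinAdj, Matrix.of_apply, ite_mul, one_mul,
    zero_mul]

lemma mv0 (hn : 4 ≤ n) (x : Fin n → ZMod 2) (i : Fin n) (hi : i.val ≤ 1) :
    (dynkinAdj (ZMod 2) n).mulVec x i = x ⟨2, by omega⟩ := by
  rw [mv_eq]
  have key : ∀ j : Fin n,
      (if ((i.val + 1 = j.val ∧ 1 ≤ i.val) ∨ (j.val + 1 = i.val ∧ 1 ≤ j.val))
        ∨ (i.val = 0 ∧ j.val = 2) ∨ (j.val = 0 ∧ i.val = 2) then x j else 0)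
      = if j = (⟨2, by omega⟩ : Fin n) then x j else 0 := by
    intro j
    simp only [Fin.ext_iff]
    split_ifs <;> first | rfl | (exfalso; omega)
  rw [Finset.sum_congr rfl (fun j _ => key j), Finset.sum_ite_eq']
  simp

lemma mv2 (hn : 4 ≤ n) (x : Fin n → ZMod 2) (i : Fin n) (hi : i.val = 2) :
    (dynkinAdj (ZMod 2) n).mulVec x i
      = x ⟨0, by omega⟩ + x ⟨1, by omega⟩ + x ⟨3, by omega⟩ := by
  rw [mv_eq]
  have key : ∀ j : Fin n,
      (if ((i.val + 1 = j.val ∧ 1 ≤ i.val) ∨ (j.val + 1 = i.val ∧ 1 ≤ j.val))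
        ∨ (i.val = 0 ∧ j.val = 2) ∨ (j.val = 0 ∧ i.val = 2) then x j else 0)
      = (if j = (⟨0, by omega⟩ : Fin n) then x j else 0)
        + (if j = (⟨1, by omega⟩ : Fin n) then x j else 0)
        + (if j = (⟨3, by omega⟩ : Fin n) then x j else 0) := by
    intro j
    simp only [Fin.ext_iff]
    split_ifs <;> first | ring1 | (exfalso; omega)
  rw [Finset.sum_congr rfl (fun j _ => key j), Finset.sum_add_distrib,
    Finset.sum_add_distrib, Finset.sum_ite_eq', Finset.sum_ite_eq', Finset.sum_ite_eq']
  simp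

lemma mvMid (x : Fin n → ZMod 2) (i : Fin n) (hi : 3 ≤ i.val) (hi2 : i.val + 1 < n) :
    (dynkinAdj (ZMod 2) n).mulVec x i
      = x ⟨i.val - 1, by omega⟩ + x ⟨i.val + 1, hi2⟩ := by
  rw [mv_eq]
  have key : ∀ j : Fin n,
      (if ((i.val + 1 = j.val ∧ 1 ≤ i.val) ∨ (j.val + 1 = i.val ∧ 1 ≤ j.val))
        ∨ (i.val = 0 ∧ j.val = 2) ∨ (j.val = 0 ∧ i.val = 2) then x j else 0)
      = (if j = (⟨i.val - 1, by omega⟩ : Fin n) then x j else 0)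
        + (if j = (⟨i.val + 1, hi2⟩ : Fin n) then x j else 0) := by
    intro j
    simp only [Fin.ext_iff]
    split_ifs <;> first | ring1 | (exfalso; omega)
  rw [Finset.sum_congr rfl (fun j _ => key j), Finset.sum_add_distrib,
    Finset.sum_ite_eq', Finset.sum_ite_eq']
  simp

lemma mvLast (hn : 4 ≤ n) (x : Fin n → ZMod 2) (i : Fin n) (hi : i.val = n - 1) :
    (dynkinAdj (ZMod 2) n).mulVec x i = x ⟨n - 2, by omega⟩ := by
  rw [mv_eq]
  have key : ∀ j : Fin n,
      (if ((i.val + 1 = j.val ∧ 1 ≤ i.val) ∨ (j.val + 1 = i.val ∧ 1 ≤ j.val))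
        ∨ (i.val = 0 ∧ j.val = 2) ∨ (j.val = 0 ∧ i.val = 2) then x j else 0)
      = if j = (⟨n - 2, by omega⟩ : Fin n) then x j else 0 := by
    intro j
    have hj := j.isLt
    simp only [Fin.ext_iff]
    split_ifs <;> first | rfl | (exfalso; omega)
  rw [Finset.sum_congr rfl (fun j _ => key j), Finset.sum_ite_eq']
  simp

lemma av_mem (hn : 4 ≤ n) : (dynkinAdj (ZMod 2) n).mulVec (av n) = 0 := by
  funext i
  simp only [Pi.zero_apply]
  have hi := i.isLt
  rcases le_or_gt i.val 1 with h | h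
  · rw [mv0 hn _ _ h]; simp [av]
  by_cases h2 : i.val = 2
  · rw [mv2 hn _ _ h2]
    rfl
  by_cases h3 : i.val = n - 1
  · rw [mvLast hn _ _ h3]
    simp only [av]
    rw [if_neg (by omega)]
  · rw [mvMid _ _ (by omega) (by omega)]
    simp only [av]
    rw [if_neg (by omega), if_neg (by omega)]
    decide

lemma bv_mem (hn : 4 ≤ n) (hpar : n % 2 = 0) :
    (dynkinAdj (ZMod 2) n).mulVec (bv n) = 0 := by
  funext i
  simp only [Pi.zero_apply]
  have hi := i.isLt
  rcases le_or_gt i.val 1 with h | h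
  · rw [mv0 hn _ _ h]; simp [bv]
  by_cases h2 : i.val = 2
  · rw [mv2 hn _ _ h2]
    norm_num [bv]
    decide
  by_cases h3 : i.val = n - 1
  · rw [mvLast hn _ _ h3]
    simp only [bv]
    rw [if_neg (by omega)]
  · rw [mvMid _ _ (by omega) (by omega)]
    simp only [bv]
    have hpar2 : (i.val - 1) % 2 = (i.val + 1) % 2 := by omega
    rw [hpar2]
    split_ifs <;> simp [CharTwo.add_self_eq_zero]

lemma ker_eq (hn : 4 ≤ n) (hpar : n % 2 = 0) :
    LinearMap.ker (Matrix.mulVecLin (dynkinAdj (ZMod 2) n))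
      = Submodule.span (ZMod 2) {av n, bv n} := by
  apply le_antisymm
  · intro x hx
    rw [LinearMap.mem_ker, mulVecLin_apply] at hx
    -- structure of a kernel element
    have claim : ∀ k, ∀ hk : k < n,
        (k % 2 = 0 ∧ 2 ≤ k → x ⟨k, hk⟩ = 0)
        ∧ (k % 2 = 1 ∧ 3 ≤ k → x ⟨k, hk⟩ = x ⟨0, by omega⟩ + x ⟨1, by omega⟩) := by
      intro k
      induction k using Nat.strong_induction_on with
      | _ k ih =>
        intro hk
        rcases lt_or_ge k 4 with hlt4 | h4
        · constructor
          · rintro ⟨hpar2, h2⟩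
            have h22 : k = 2 := by omega
            subst h22
            have := congrFun hx ⟨0, by omega⟩
            rw [Pi.zero_apply, mv0 hn _ _ (by norm_num)] at this
            exact this
          · rintro ⟨hpar2, h2⟩
            have h33 : k = 3 := by omega
            subst h33
            have := congrFun hx ⟨2, by omega⟩
            rw [Pi.zero_apply, mv2 hn _ _ rfl] at this
            rw [add_eq_zero_iff_eq_neg, CharTwo.neg_eq (R := ZMod 2)] at this
            exact this.symm
        · -- k ≥ 4: x k = x (k-2)
          have hrec : x ⟨k, hk⟩ = x ⟨k - 2, by omega⟩ := by
            have := congrFun hx ⟨k - 1, by omega⟩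
            rw [Pi.zero_apply,
              mvMid _ _ (show 3 ≤ k - 1 by omega) (show k - 1 + 1 < n by omega)] at this
            have e1 : (⟨k - 1 - 1, by omega⟩ : Fin n) = ⟨k - 2, by omega⟩ := by
              apply Fin.ext
              show k - 1 - 1 = k - 2
              omega
            have e2 : (⟨k - 1 + 1, by omega⟩ : Fin n) = ⟨k, hk⟩ := by
              apply Fin.ext
              show k - 1 + 1 = k
              omega
            rw [e1, e2, add_eq_zero_iff_eq_neg, CharTwo.neg_eq (R := ZMod 2)] at this
            exact this.symm
          have ih2 := ih (k - 2) (by omega) (by omega)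
          constructor
          · rintro ⟨hpar2, h2⟩
            rw [hrec]
            exact ih2.1 ⟨by omega, by omega⟩
          · rintro ⟨hpar2, h2⟩
            rw [hrec]
            exact ih2.2 ⟨by omega, by omega⟩
    rw [Submodule.mem_span_pair]
    refine ⟨x ⟨0, by omega⟩, x ⟨0, by omega⟩ + x ⟨1, by omega⟩, ?_⟩
    funext i
    simp only [Pi.add_apply, Pi.smul_apply, smul_eq_mul, av, bv]
    have hi := i.isLt
    by_cases h0 : i.val = 0
    · rw [if_pos (by omega), if_neg (by omega), mul_one, mul_zero, add_zero]
      have : i = ⟨0, by omega⟩ := Fin.ext h0.symm.symm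
      rw [this]
    by_cases h1 : i.val = 1
    · rw [if_pos (by omega), if_pos (by omega), mul_one, mul_one, ← add_assoc,
        CharTwo.add_self_eq_zero, zero_add]
      have : i = ⟨1, by omega⟩ := Fin.ext h1
      rw [this]
    rcases Nat.even_or_odd i.val with he | ho
    · have he' : i.val % 2 = 0 := by simpa [Nat.even_iff] using he
      rw [if_neg (by omega), if_neg (by omega), mul_zero, mul_zero, add_zero]
      exact ((claim i.val i.isLt).1 ⟨he', by omega⟩).symm
    · have ho' : i.val % 2 = 1 := by simpa [Nat.odd_iff] using ho
      rw [if_neg (by omega), if_pos ho', mul_zero, mul_one, zero_add]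
      exact ((claim i.val i.isLt).2 ⟨ho', by omega⟩).symm
  · rw [Submodule.span_le]
    rintro y (rfl | rfl)
    · rw [SetLike.mem_coe, LinearMap.mem_ker, mulVecLin_apply]
      exact av_mem hn
    · rw [SetLike.mem_coe, LinearMap.mem_ker, mulVecLin_apply]
      exact bv_mem hn hpar

lemma sum_ind (k : ℕ) (hk : k < n) :
    ∑ i : Fin n, (if i.val = k then (1 : ZMod 2) else 0) = 1 := by
  have key : ∀ i : Fin n, (if i.val = k then (1 : ZMod 2) else 0)
      = if i = (⟨k, hk⟩ : Fin n) then 1 else 0 := by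
    intro i
    simp [Fin.ext_iff]
  rw [Finset.sum_congr rfl (fun i _ => key i), Finset.sum_ite_eq']
  simp

lemma oddsum (m : ℕ) :
    ∑ k ∈ Finset.range m, (if k % 2 = 1 then (1 : ZMod 2) else 0) = ((m / 2 : ℕ) : ZMod 2) := by
  induction m with
  | zero => simp
  | succ m ih =>
    rw [Finset.sum_range_succ, ih]
    rcases Nat.even_or_odd m with h | h
    · simp only [Nat.even_iff] at h
      rw [if_neg (by omega), add_zero, show (m + 1) / 2 = m / 2 by omega]
    · simp only [Nat.odd_iff] at h
      rw [if_pos h, show (m + 1) / 2 = m / 2 + 1 by omega, Nat.cast_add, Nat.cast_one]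

lemma dot_aa (hn : 4 ≤ n) : dotProduct (av n) (av n) = 0 := by
  unfold dotProduct
  have key : ∀ i : Fin n, av n i * av n i
      = (if i.val = 0 then (1 : ZMod 2) else 0) + (if i.val = 1 then 1 else 0) := by
    intro i
    simp only [av]
    split_ifs <;> first | decide | (exfalso; omega)
  rw [Finset.sum_congr rfl (fun i _ => key i), Finset.sum_add_distrib,
    sum_ind 0 (by omega), sum_ind 1 (by omega)]
  decide

lemma dot_ab (hn : 4 ≤ n) : dotProduct (av n) (bv n) = 1 := by
  unfold dotProduct
  have key : ∀ i : Fin n, av n i * bv n i = (if i.val = 1 then (1 : ZMod 2) else 0) := by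
    intro i
    simp only [av, bv]
    split_ifs <;> first | decide | (exfalso; omega)
  rw [Finset.sum_congr rfl (fun i _ => key i), sum_ind 1 (by omega)]

lemma dot_ba (hn : 4 ≤ n) : dotProduct (bv n) (av n) = 1 := by
  unfold dotProduct
  have key : ∀ i : Fin n, bv n i * av n i = (if i.val = 1 then (1 : ZMod 2) else 0) := by
    intro i
    simp only [av, bv]
    split_ifs <;> first | decide | (exfalso; omega)
  rw [Finset.sum_congr rfl (fun i _ => key i), sum_ind 1 (by omega)]

lemma dot_bb (h4 : n % 4 = 0) : dotProduct (bv n) (bv n) = 0 := by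
  unfold dotProduct
  have key : ∀ i : Fin n, bv n i * bv n i = (if i.val % 2 = 1 then (1 : ZMod 2) else 0) := by
    intro i
    simp only [bv]
    split_ifs <;> decide
  rw [Finset.sum_congr rfl (fun i _ => key i),
    Fin.sum_univ_eq_sum_range (fun k => if k % 2 = 1 then (1 : ZMod 2) else 0) n, oddsum]
  rw [ZMod.natCast_eq_zero_iff]
  omega

end DynkinAux

open DynkinAux in
theorem stmt8 (n : ℕ) (hn : 4 ≤ n) (h4 : n % 4 = 0) :
    LinearMap.ker (Matrix.mulVecLin (dynkinAdj (ZMod 2) n * dynkinAdj (ZMod 2) n))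
        = LinearMap.ker (Matrix.mulVecLin (dynkinAdj (ZMod 2) n))
    ∧ LinearMap.ker (Matrix.mulVecLin (dynkinAdj (ZMod 2) n))
        = Submodule.span (ZMod 2)
            {(fun i => if i.val ≤ 1 then 1 else 0 : Fin n → ZMod 2),
             (fun i => if i.val % 2 = 1 then 1 else 0 : Fin n → ZMod 2)}
    ∧ Module.finrank (ZMod 2)
        (LinearMap.ker (Matrix.mulVecLin (dynkinAdj (ZMod 2) n))) = 2 := by
  have hpar : n % 2 = 0 := by omega
  have hset : ({(fun i => if i.val ≤ 1 then 1 else 0 : Fin n → ZMod 2),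
      (fun i => if i.val % 2 = 1 then 1 else 0 : Fin n → ZMod 2)} : Set (Fin n → ZMod 2))
      = {av n, bv n} := rfl
  have hker := ker_eq (n := n) hn hpar
  refine ⟨?_, by rw [hker, hset], ?_⟩
  · -- ker A² = ker A
    apply le_antisymm
    · intro x hx
      rw [LinearMap.mem_ker, mulVecLin_apply, ← Matrix.mulVec_mulVec] at hx
      have hAx : (dynkinAdj (ZMod 2) n).mulVec x ∈
          LinearMap.ker (Matrix.mulVecLin (dynkinAdj (ZMod 2) n)) := by
        rw [LinearMap.mem_ker, mulVecLin_apply]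
        exact hx
      rw [hker, Submodule.mem_span_pair] at hAx
      obtain ⟨c, d, hcd⟩ := hAx
      have hda : dotProduct (av n) ((dynkinAdj (ZMod 2) n).mulVec x) = 0 := by
        rw [Matrix.dotProduct_mulVec, ← Matrix.mulVec_transpose, adj_symm, av_mem hn,
          zero_dotProduct]
      have hdb : dotProduct (bv n) ((dynkinAdj (ZMod 2) n).mulVec x) = 0 := by
        rw [Matrix.dotProduct_mulVec, ← Matrix.mulVec_transpose, adj_symm, bv_mem hn hpar,
          zero_dotProduct]
      rw [← hcd, dotProduct_add, dotProduct_smul, dotProduct_smul,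
        dot_aa hn, dot_ab hn] at hda
      rw [← hcd, dotProduct_add, dotProduct_smul, dotProduct_smul,
        dot_ba hn, dot_bb h4] at hdb
      simp only [smul_zero, smul_eq_mul, mul_one, mul_zero, zero_add, add_zero] at hda hdb
      rw [LinearMap.mem_ker, mulVecLin_apply, ← hcd, hda, hdb]
      simp
    · intro x hx
      rw [LinearMap.mem_ker, mulVecLin_apply] at hx
      rw [LinearMap.mem_ker, mulVecLin_apply, ← Matrix.mulVec_mulVec, hx,
        Matrix.mulVec_zero]
  · -- finrank = 2
    rw [hker]
    have hli : LinearIndependent (ZMod 2) ![av n, bv n] := by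
      rw [LinearIndependent.pair_iff]
      intro s t hst
      have h0 := congrFun hst ⟨0, by omega⟩
      have h1 := congrFun hst ⟨1, by omega⟩
      simp only [Pi.add_apply, Pi.smul_apply, smul_eq_mul, av, bv, Pi.zero_apply] at h0 h1
      rw [if_pos (by norm_num), if_neg (by norm_num), mul_one, mul_zero, add_zero] at h0
      rw [if_pos (by norm_num), if_pos (by norm_num), mul_one, mul_one, h0, zero_add] at h1
      exact ⟨h0, h1⟩
    have hrange : Set.range ![av n, bv n] = {av n, bv n} := by
      ext v
      simp only [Set.mem_range, Fin.exists_fin_two, Matrix.cons_val_zero, Matrix.cons_val_one,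
        Matrix.head_cons, Set.mem_insert_iff, Set.mem_singleton_iff]
      tauto
    rw [← hrange, finrank_span_eq_card hli]
    rfl
end

section
/- Let n ≡ 0 (mod 4) and let A and W = [e, Ae, …, A^{n-1}e] be the adjacency matrix and walk matrix of the Dynkin graph D_n. Then over 𝔽₂, the column space of W intersects the kernel of A trivially: Im(W) ∩ Ker(A) = {0}. -/
open Matrix

/-- The walk matrix `[e, Ae, …, A^{n-1}e]` of an `n × n` matrix. -/
def walkMatrix {R : Type*} [Semiring R] {n : ℕ} (A : Matrix (Fin n) (Fin n) R) :
    Matrix (Fin n) (Fin n) R :=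
  Matrix.of fun i k => ((A ^ (k : ℕ)) *ᵥ (fun _ => 1)) i

/-!
`A` is symmetric, so a kernel vector `y` with `y ⬝ᵥ e = 0` satisfies `y ⬝ᵥ Aᵏ e = (Aᵏ y) ⬝ᵥ e = 0`
for all `k`, i.e. it is orthogonal to the column space of `W`. Over `𝔽₂` the kernel of the adjacency
matrix of `D_n` (`n` even) is spanned by the indicator `u` of the two leaves at the branch vertex
and the indicator `o` of the odd vertices. For `4 ∣ n` both have even weight, so the whole kernel
is orthogonal to `e`; moreover `u ⬝ᵥ u = o ⬝ᵥ o = 0` and `u ⬝ᵥ o = 1`, so the dot product is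
nondegenerate on the kernel. A vector of `Im W ∩ Ker A` is orthogonal to the kernel containing it,
hence zero.
-/

section WalkMatrix

variable {R : Type*} [CommSemiring R] {n : ℕ} {A : Matrix (Fin n) (Fin n) R}

theorem vecMul_walkMatrix_eq_zero (hA : A.IsSymm) {y : Fin n → R} (hy : A *ᵥ y = 0)
    (hy1 : y ⬝ᵥ 1 = 0) : y ᵥ* walkMatrix A = 0 := by
  funext k
  change y ⬝ᵥ (A ^ (k : ℕ) *ᵥ 1) = 0
  cases (k : ℕ) with
  | zero => rw [pow_zero, one_mulVec, hy1]
  | succ k =>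
    rw [pow_succ', ← mulVec_mulVec, dotProduct_mulVec, ← mulVec_transpose, hA.eq, hy,
      zero_dotProduct]

theorem range_walkMatrix_inf_ker_eq_bot (hA : A.IsSymm)
    (hsum : ∀ y ∈ LinearMap.ker A.mulVecLin, y ⬝ᵥ 1 = 0)
    (hnondeg : ∀ v ∈ LinearMap.ker A.mulVecLin,
      (∀ y ∈ LinearMap.ker A.mulVecLin, y ⬝ᵥ v = 0) → v = 0) :
    LinearMap.range (walkMatrix A).mulVecLin ⊓ LinearMap.ker A.mulVecLin = ⊥ := by
  refine eq_bot_iff.2 fun v ⟨⟨c, hc⟩, hv⟩ => hnondeg v hv fun y hy => ?_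
  rw [← hc, mulVecLin_apply, dotProduct_mulVec,
    vecMul_walkMatrix_eq_zero hA hy (hsum y hy), zero_dotProduct]

end WalkMatrix

namespace DynkinAdj

variable {R : Type*} {n : ℕ}

theorem isSymm [Zero R] [One R] : (dynkinAdj R n).IsSymm := by
  ext i j
  simp only [transpose_apply, dynkinAdj, of_apply]
  exact if_congr (by tauto) rfl rfl

variable [NonAssocSemiring R] (x : Fin n → R)

theorem mulVec_apply (i : Fin n) :
    (dynkinAdj R n *ᵥ x) i = ∑ j with ((i.val + 1 = j.val ∧ 1 ≤ i.val) ∨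
      (j.val + 1 = i.val ∧ 1 ≤ j.val)) ∨ (i.val = 0 ∧ j.val = 2) ∨ (j.val = 0 ∧ i.val = 2),
      x j := by
  simp only [mulVec, dotProduct, dynkinAdj, of_apply, ite_mul, one_mul, zero_mul,
    Finset.sum_ite, Finset.sum_const_zero, add_zero]

theorem mulVec_apply_of_le_one (hn : 3 ≤ n) {i : Fin n} (hi : i.val ≤ 1) :
    (dynkinAdj R n *ᵥ x) i = x ⟨2, hn⟩ := by
  rw [mulVec_apply, ← Finset.sum_singleton x ⟨2, hn⟩]
  congr 1
  ext j
  simp only [Finset.mem_filter, Finset.mem_univ, true_and, Finset.mem_singleton, Fin.ext_iff]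
  omega

theorem mulVec_apply_two (hn : 4 ≤ n) :
    (dynkinAdj R n *ᵥ x) ⟨2, by omega⟩ = x ⟨0, by omega⟩ + x ⟨1, by omega⟩ + x ⟨3, hn⟩ := by
  rw [mulVec_apply, add_assoc, ← Finset.sum_pair (by simp), ← Finset.sum_insert (by simp)]
  congr 1
  ext j
  simp only [Finset.mem_filter, Finset.mem_univ, true_and, Finset.mem_insert,
    Finset.mem_singleton, Fin.ext_iff, and_true]
  omega

theorem mulVec_apply_add_three (m : ℕ) (hm : m + 4 < n) :
    (dynkinAdj R n *ᵥ x) ⟨m + 3, by omega⟩ = x ⟨m + 2, by omega⟩ + x ⟨m + 4, hm⟩ := by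
  rw [mulVec_apply, ← Finset.sum_pair (by simp)]
  congr 1
  ext j
  simp only [Finset.mem_filter, Finset.mem_univ, true_and, Finset.mem_insert,
    Finset.mem_singleton, Fin.ext_iff]
  omega

theorem mulVec_apply_last (hn : 4 ≤ n) :
    (dynkinAdj R n *ᵥ x) ⟨n - 1, by omega⟩ = x ⟨n - 2, by omega⟩ := by
  rw [mulVec_apply, ← Finset.sum_singleton x ⟨n - 2, by omega⟩]
  congr 1
  ext j
  simp only [Finset.mem_filter, Finset.mem_univ, true_and, Finset.mem_singleton, Fin.ext_iff]
  omega

theorem mulVec_eq_zero_iff (hn : 4 ≤ n) :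
    dynkinAdj R n *ᵥ x = 0 ↔
      x ⟨2, by omega⟩ = 0 ∧ x ⟨0, by omega⟩ + x ⟨1, by omega⟩ + x ⟨3, hn⟩ = 0 ∧
        (∀ m (hm : m + 4 < n), x ⟨m + 2, by omega⟩ + x ⟨m + 4, hm⟩ = 0) ∧
        x ⟨n - 2, by omega⟩ = 0 := by
  constructor
  · intro h
    refine ⟨?_, ?_, fun m hm => ?_, ?_⟩
    · rw [← mulVec_apply_of_le_one x (i := ⟨0, by omega⟩) (by omega) zero_le_one, h,
        Pi.zero_apply]
    · rw [← mulVec_apply_two x hn, h, Pi.zero_apply]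
    · rw [← mulVec_apply_add_three x m hm, h, Pi.zero_apply]
    · rw [← mulVec_apply_last x hn, h, Pi.zero_apply]
  · rintro ⟨h2, h3, hmid, hlast⟩
    funext ⟨i, hi⟩
    rw [Pi.zero_apply]
    rcases Nat.lt_or_ge i 2 with hi2 | hi2
    · rwa [mulVec_apply_of_le_one x (i := ⟨i, hi⟩) (by omega) (Nat.le_of_lt_succ hi2)]
    obtain rfl | hi3 := eq_or_lt_of_le hi2
    · rwa [mulVec_apply_two x hn]
    obtain ⟨m, rfl⟩ := Nat.exists_eq_add_of_le' (Nat.succ_le_of_lt hi3)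
    rcases Nat.lt_or_ge (m + 4) n with hm | hm
    · rw [mulVec_apply_add_three x m hm, hmid m hm]
    · rwa [show (⟨m + 3, hi⟩ : Fin n) = ⟨n - 1, by omega⟩ from Fin.ext (by simp only; omega),
        mulVec_apply_last x hn]

end DynkinAdj

theorem Fin.sum_ite_val_lt_two {M : Type*} [AddCommMonoid M] {n : ℕ} (hn : 2 ≤ n) (f : ℕ → M) :
    ∑ i : Fin n, (if (i : ℕ) < 2 then f i else 0) = f 0 + f 1 := by
  obtain ⟨k, rfl⟩ := Nat.exists_eq_add_of_le' hn
  simp [Fin.sum_univ_succ]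

theorem ZMod.dotProduct_self_eq_dotProduct_one {ι : Type*} [Fintype ι] (x : ι → ZMod 2) :
    x ⬝ᵥ x = x ⬝ᵥ 1 := by
  have hsq : ∀ a : ZMod 2, a * a = a * 1 := by decide
  simp only [dotProduct, hsq, Pi.one_apply]

section KernelZModTwo

variable {n : ℕ}

-- Vertices `0` and `1` are the two leaves attached to the branch vertex `2`.
def leafPairVec (n : ℕ) : Fin n → ZMod 2 := fun i => if (i : ℕ) < 2 then 1 else 0

def parityVec (n : ℕ) : Fin n → ZMod 2 := fun i => (i : ℕ)

theorem leafPairVec_dotProduct_one (hn : 2 ≤ n) : leafPairVec n ⬝ᵥ 1 = 0 := by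
  rw [dotProduct_one]
  exact (Fin.sum_ite_val_lt_two hn fun _ => (1 : ZMod 2)).trans (by decide)

theorem parityVec_dotProduct_one (hn : 4 ∣ n) : parityVec n ⬝ᵥ 1 = 0 := by
  rw [dotProduct_one]
  unfold parityVec
  rw [Fin.sum_univ_eq_sum_range (fun i => (i : ZMod 2)), ← Nat.cast_sum,
    ZMod.natCast_eq_zero_iff_even, even_iff_two_dvd]
  have h := Finset.sum_range_id_mul_two n
  have : 4 ∣ n * (n - 1) := hn.mul_right _
  omega

theorem leafPairVec_dotProduct_parityVec (hn : 2 ≤ n) :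
    leafPairVec n ⬝ᵥ parityVec n = 1 := by
  simp only [leafPairVec, parityVec, dotProduct, ite_mul, one_mul, zero_mul]
  rw [Fin.sum_ite_val_lt_two hn Nat.cast, Nat.cast_zero, Nat.cast_one, zero_add]

theorem dynkinAdj_mulVec_leafPairVec (hn : 4 ≤ n) :
    dynkinAdj (ZMod 2) n *ᵥ leafPairVec n = 0 := by
  rw [DynkinAdj.mulVec_eq_zero_iff _ hn]
  refine ⟨rfl, rfl, fun m _ => by simp [leafPairVec], if_neg (show ¬n - 2 < 2 by omega)⟩

theorem dynkinAdj_mulVec_parityVec (hn : 4 ≤ n) (he : Even n) :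
    dynkinAdj (ZMod 2) n *ᵥ parityVec n = 0 := by
  rw [DynkinAdj.mulVec_eq_zero_iff _ hn]
  refine ⟨?_, ?_, fun m _ => ?_, ?_⟩ <;>
    simp only [parityVec, ← Nat.cast_add, ZMod.natCast_eq_zero_iff_even]
  · decide
  · decide
  · exact ⟨m + 3, by ring⟩
  · obtain ⟨k, rfl⟩ := he
    exact ⟨k - 1, by omega⟩

theorem apply_add_two_of_dynkinAdj_mulVec_eq_zero (hn : 4 ≤ n) {v : Fin n → ZMod 2}
    (hv : dynkinAdj (ZMod 2) n *ᵥ v = 0) (m : ℕ) (hm : m + 2 < n) :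
    v ⟨m + 2, hm⟩ = (v ⟨0, by omega⟩ + v ⟨1, by omega⟩) * m := by
  obtain ⟨h2, h3, hmid, -⟩ := (DynkinAdj.mulVec_eq_zero_iff v hn).1 hv
  induction m using Nat.twoStepInduction with
  | zero => rw [h2, Nat.cast_zero, mul_zero]
  | one => rw [Nat.cast_one, mul_one, eq_comm, ← CharTwo.add_eq_zero, h3]
  | more m ih _ =>
    rw [← CharTwo.add_eq_zero.1 (hmid m hm), ih (by omega)]
    push_cast
    rw [CharTwo.two_eq_zero (R := ZMod 2), add_zero]

theorem ker_dynkinAdj_eq_span (hn : 4 ≤ n) (he : Even n) :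
    LinearMap.ker (dynkinAdj (ZMod 2) n).mulVecLin =
      Submodule.span (ZMod 2) {leafPairVec n, parityVec n} := by
  refine le_antisymm (fun v hv => ?_) ?_
  · rw [LinearMap.mem_ker, mulVecLin_apply] at hv
    refine Submodule.mem_span_pair.2 ⟨v ⟨0, by omega⟩, v ⟨0, by omega⟩ + v ⟨1, by omega⟩, ?_⟩
    funext ⟨i, hi⟩
    rcases i with _ | _ | m
    · simp [leafPairVec, parityVec]
    · simp [leafPairVec, parityVec, ← add_assoc, CharTwo.add_self_eq_zero]
    · rw [apply_add_two_of_dynkinAdj_mulVec_eq_zero hn hv m hi]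
      simp [leafPairVec, parityVec, add_assoc, one_add_one_eq_two, CharTwo.two_eq_zero]
  · rw [Submodule.span_le, Set.insert_subset_iff, Set.singleton_subset_iff]
    exact ⟨dynkinAdj_mulVec_leafPairVec hn, dynkinAdj_mulVec_parityVec hn he⟩

theorem dotProduct_one_eq_zero_of_mem_ker_dynkinAdj (hn : 4 ≤ n) (h4 : 4 ∣ n)
    {y : Fin n → ZMod 2} (hy : y ∈ LinearMap.ker (dynkinAdj (ZMod 2) n).mulVecLin) :
    y ⬝ᵥ 1 = 0 := by
  rw [ker_dynkinAdj_eq_span hn (h4.even (by norm_num)), Submodule.mem_span_pair] at hy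
  obtain ⟨a, c, rfl⟩ := hy
  rw [add_dotProduct, smul_dotProduct, smul_dotProduct, leafPairVec_dotProduct_one (by omega),
    parityVec_dotProduct_one h4, smul_zero, smul_zero, add_zero]

theorem eq_zero_of_mem_ker_dynkinAdj_of_forall_dotProduct_eq_zero (hn : 4 ≤ n) (h4 : 4 ∣ n)
    {v : Fin n → ZMod 2} (hv : v ∈ LinearMap.ker (dynkinAdj (ZMod 2) n).mulVecLin)
    (horth : ∀ y ∈ LinearMap.ker (dynkinAdj (ZMod 2) n).mulVecLin, y ⬝ᵥ v = 0) : v = 0 := by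
  rw [ker_dynkinAdj_eq_span hn (h4.even (by norm_num))] at hv horth
  obtain ⟨a, c, rfl⟩ := Submodule.mem_span_pair.1 hv
  have hleaf := horth _ (Submodule.subset_span (Set.mem_insert _ _))
  have hparity := horth _ (Submodule.subset_span (Set.mem_insert_of_mem _ rfl))
  simp only [dotProduct_add, dotProduct_smul, ZMod.dotProduct_self_eq_dotProduct_one,
    leafPairVec_dotProduct_one (by omega : 2 ≤ n), parityVec_dotProduct_one h4,
    dotProduct_comm (parityVec n) (leafPairVec n),
    leafPairVec_dotProduct_parityVec (by omega : 2 ≤ n), smul_eq_mul, mul_zero, mul_one, zero_add,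
    add_zero] at hleaf hparity
  rw [hleaf, hparity, zero_smul, zero_smul, add_zero]

end KernelZModTwo

theorem stmt10 (n : ℕ) (hn : 4 ≤ n) (h4 : n % 4 = 0) :
    LinearMap.range (Matrix.mulVecLin (walkMatrix (dynkinAdj (ZMod 2) n)))
        ⊓ LinearMap.ker (Matrix.mulVecLin (dynkinAdj (ZMod 2) n)) = ⊥ := by
  have h4' : 4 ∣ n := Nat.dvd_of_mod_eq_zero h4
  exact range_walkMatrix_inf_ker_eq_bot DynkinAdj.isSymm
    (fun _ hy => dotProduct_one_eq_zero_of_mem_ker_dynkinAdj hn h4' hy)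
    (fun _ hv => eq_zero_of_mem_ker_dynkinAdj_of_forall_dotProduct_eq_zero hn h4' hv)
end

section
/- If n ≡ 0 (mod 4), then the rank over 𝔽₂ of the walk matrix W(D_n) = [e, Ae, …, A^{n-1}e] of the Dynkin graph D_n is at most n/2 − 1. -/
open Matrix

/-- entry of a vector at a natural index, 0 if out of range -/
def nth {n : ℕ} (u : Fin n → ZMod 2) (k : ℕ) : ZMod 2 := if h : k < n then u ⟨k, h⟩ else 0

lemma sum_pin {n : ℕ} (u : Fin n → ZMod 2) (P : Prop) [Decidable P] (c : ℕ) :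
    (∑ j : Fin n, if j.val = c ∧ P then u j else 0) = if P then nth u c else 0 := by
  by_cases hP : P
  · simp only [hP, and_true, if_true]
    unfold nth
    by_cases hc : c < n
    · rw [dif_pos hc]
      calc (∑ j : Fin n, if j.val = c then u j else 0)
          = ∑ j : Fin n, if j = (⟨c, hc⟩ : Fin n) then u j else 0 := by
            refine Finset.sum_congr rfl fun j _ => ?_
            simp [Fin.ext_iff]
        _ = u ⟨c, hc⟩ := by
            rw [Finset.sum_ite_eq' Finset.univ (⟨c, hc⟩ : Fin n) u]
            simp
    · rw [dif_neg hc]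
      apply Finset.sum_eq_zero
      intro j _
      rw [if_neg]
      omega
  · simp [hP]

lemma dynkin_symm (n : ℕ) : (dynkinAdj (ZMod 2) n)ᵀ = dynkinAdj (ZMod 2) n := by
  ext i j
  simp only [dynkinAdj, transpose_apply, of_apply]
  apply if_congr _ rfl rfl
  tauto

lemma mulVec_dynkin {n : ℕ} (u : Fin n → ZMod 2) (i : Fin n) :
    (dynkinAdj (ZMod 2) n *ᵥ u) i =
      ((if 1 ≤ i.val then nth u (i.val + 1) else 0)
      + (if 2 ≤ i.val then nth u (i.val - 1) else 0))
      + ((if i.val = 0 then nth u 2 else 0)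
      + (if i.val = 2 then nth u 0 else 0)) := by
  have key : ∀ j : Fin n, dynkinAdj (ZMod 2) n i j * u j =
      ((if j.val = i.val + 1 ∧ 1 ≤ i.val then u j else 0)
      + (if j.val = i.val - 1 ∧ 2 ≤ i.val then u j else 0))
      + ((if j.val = 2 ∧ i.val = 0 then u j else 0)
      + (if j.val = 0 ∧ i.val = 2 then u j else 0)) := by
    intro j
    simp only [dynkinAdj, of_apply]
    split_ifs <;> first | ring1 | (exfalso; omega)
  show (∑ j : Fin n, dynkinAdj (ZMod 2) n i j * u j) = _
  simp only [key]
  rw [Finset.sum_add_distrib, Finset.sum_add_distrib, Finset.sum_add_distrib,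
    sum_pin, sum_pin, sum_pin, sum_pin]

/-- The kernel vectors: t=0 gives δ₀+δ₁, t=1 gives δ₀+δ₂+⋯+δ_m, and
2 ≤ t ≤ m gives δ_t + δ_{n+1-t}. -/
def gvec (n m t : ℕ) : Fin n → ZMod 2 := fun i =>
  if t = 0 then (if i.val ≤ 1 then 1 else 0)
  else if t = 1 then (if i.val = 0 ∨ (2 ≤ i.val ∧ i.val ≤ m) then 1 else 0)
  else (if i.val = t ∨ i.val + t = n + 1 then 1 else 0)

lemma nth_gvec {n : ℕ} (m t k : ℕ) (hnm : n = 2 * m) (hm : 2 ≤ m) (ht : t ≤ m) :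
    nth (gvec n m t) k =
      if t = 0 then (if k ≤ 1 then 1 else 0)
      else if t = 1 then (if k = 0 ∨ (2 ≤ k ∧ k ≤ m) then 1 else 0)
      else (if k = t ∨ k + t = n + 1 then 1 else 0) := by
  unfold nth gvec
  split_ifs <;> first | rfl | (exfalso; omega)

lemma gvec_apply {n : ℕ} (m t k : ℕ) (hnm : n = 2 * m) (hm : 2 ≤ m) (ht : t ≤ m)
    (hk : k < n) :
    gvec n m t ⟨k, hk⟩ =
      if t = 0 then (if k ≤ 1 then 1 else 0)
      else if t = 1 then (if k = 0 ∨ (2 ≤ k ∧ k ≤ m) then 1 else 0)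
      else (if k = t ∨ k + t = n + 1 then 1 else 0) := by
  have h := nth_gvec m t k hnm hm ht
  rwa [nth, dif_pos hk] at h

section rels
variable {n : ℕ} (m : ℕ)

lemma rel0 (hnm : n = 2 * m) (hm : 2 ≤ m) :
    dynkinAdj (ZMod 2) n *ᵥ gvec n m 0 = 0 := by
  funext i
  have hi := i.isLt
  rw [mulVec_dynkin]
  simp only [nth_gvec m 0 _ hnm hm (by omega), Pi.zero_apply, if_pos (rfl : (0:ℕ) = 0)]
  split_ifs <;> first | decide | (exfalso; first | assumption | omega | (simp only [false_or, or_false, true_or, or_true, not_true, not_false_eq_true, false_and, and_false, and_true, true_and] at *) <;> omega)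

set_option maxHeartbeats 1000000 in
lemma rel1 (hnm : n = 2 * m) (hm : 2 ≤ m) :
    dynkinAdj (ZMod 2) n *ᵥ gvec n m 1 = gvec n m 0 + gvec n m m := by
  funext i
  have hi := i.isLt
  rw [mulVec_dynkin]
  simp only [nth_gvec m 1 _ hnm hm (by omega), Pi.add_apply, gvec,
    if_neg (show ¬(1:ℕ) = 0 by omega), if_pos (rfl : (1:ℕ) = 1), if_pos (rfl : (0:ℕ) = 0),
    if_neg (show ¬m = 0 by omega), if_neg (show ¬m = 1 by omega)]
  split_ifs <;> first | decide | (exfalso; first | assumption | omega | (simp only [false_or, or_false, true_or, or_true, not_true, not_false_eq_true, false_and, and_false, and_true, true_and] at *) <;> omega)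

set_option maxHeartbeats 1000000 in
lemma rel2a (hnm : n = 2 * m) (hm : m = 2) :
    dynkinAdj (ZMod 2) n *ᵥ gvec n m 2 = gvec n m 0 + gvec n m 2 := by
  subst hm
  funext i
  have hi := i.isLt
  rw [mulVec_dynkin]
  simp only [nth_gvec 2 2 _ hnm (by omega) (by omega), Pi.add_apply, gvec,
    if_neg (show ¬(2:ℕ) = 0 by omega), if_neg (show ¬(2:ℕ) = 1 by omega),
    if_pos (rfl : (0:ℕ) = 0)]
  split_ifs <;> first | decide | (exfalso; first | assumption | omega | (simp only [false_or, or_false, true_or, or_true, not_true, not_false_eq_true, false_and, and_false, and_true, true_and] at *) <;> omega)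

set_option maxHeartbeats 1000000 in
lemma rel2b (hnm : n = 2 * m) (hm : 3 ≤ m) :
    dynkinAdj (ZMod 2) n *ᵥ gvec n m 2 = gvec n m 0 + gvec n m 3 := by
  funext i
  have hi := i.isLt
  rw [mulVec_dynkin]
  simp only [nth_gvec m 2 _ hnm (by omega) (by omega), Pi.add_apply, gvec,
    if_neg (show ¬(2:ℕ) = 0 by omega), if_neg (show ¬(2:ℕ) = 1 by omega),
    if_neg (show ¬(3:ℕ) = 0 by omega), if_neg (show ¬(3:ℕ) = 1 by omega),
    if_pos (rfl : (0:ℕ) = 0)]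
  split_ifs <;> first | decide | (exfalso; first | assumption | omega | (simp only [false_or, or_false, true_or, or_true, not_true, not_false_eq_true, false_and, and_false, and_true, true_and] at *) <;> omega)

set_option maxHeartbeats 1000000 in
lemma relt (t : ℕ) (hnm : n = 2 * m) (h3 : 3 ≤ t) (htm : t + 1 ≤ m) :
    dynkinAdj (ZMod 2) n *ᵥ gvec n m t = gvec n m (t - 1) + gvec n m (t + 1) := by
  funext i
  have hi := i.isLt
  rw [mulVec_dynkin]
  simp only [nth_gvec m t _ hnm (by omega) (by omega), Pi.add_apply, gvec]
  rw [show t - 1 = t - 2 + 1 by omega] at *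
  simp only [if_neg (show ¬(t = 0) by omega), if_neg (show ¬(t = 1) by omega),
    if_neg (show ¬(t - 2 + 1 = 0) by omega), if_neg (show ¬(t - 2 + 1 = 1) by omega),
    if_neg (show ¬(t + 1 = 0) by omega), if_neg (show ¬(t + 1 = 1) by omega)]
  split_ifs <;> first | decide | (exfalso; first | assumption | omega | (simp only [false_or, or_false, true_or, or_true, not_true, not_false_eq_true, false_and, and_false, and_true, true_and] at *) <;> omega)

set_option maxHeartbeats 1000000 in
lemma relm (hnm : n = 2 * m) (hm : 3 ≤ m) :
    dynkinAdj (ZMod 2) n *ᵥ gvec n m m = gvec n m (m - 1) + gvec n m m := by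
  funext i
  have hi := i.isLt
  rw [mulVec_dynkin]
  simp only [nth_gvec m m _ hnm (by omega) (by omega), Pi.add_apply, gvec]
  rw [show m - 1 = m - 2 + 1 by omega] at *
  simp only [if_neg (show ¬(m = 0) by omega), if_neg (show ¬(m = 1) by omega),
    if_neg (show ¬(m - 2 + 1 = 0) by omega), if_neg (show ¬(m - 2 + 1 = 1) by omega)]
  split_ifs <;> first | decide | (exfalso; first | assumption | omega | (simp only [false_or, or_false, true_or, or_true, not_true, not_false_eq_true, false_and, and_false, and_true, true_and] at *) <;> omega)

end rels

section dots
variable {n : ℕ} (m : ℕ)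

lemma card_filter_val {n : ℕ} (Q : ℕ → Prop) [DecidablePred Q] :
    (Finset.univ.filter fun i : Fin n => Q i.val).card = ((Finset.range n).filter Q).card := by
  apply Finset.card_bij (fun i _ => i.val)
  · intro a ha
    simp only [Finset.mem_filter, Finset.mem_range]
    simp only [Finset.mem_filter, Finset.mem_univ, true_and] at ha
    exact ⟨a.isLt, ha⟩
  · intro a _ b _ h
    exact Fin.ext h
  · intro b hb
    simp only [Finset.mem_filter, Finset.mem_range] at hb
    exact ⟨⟨b, hb.1⟩, by simp [hb.2], rfl⟩

lemma gdot (t : ℕ) (hnm : n = 2 * m) (hm2 : 2 ≤ m) (hme : m % 2 = 0) (ht : t ≤ m) :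
    gvec n m t ⬝ᵥ (fun _ => (1 : ZMod 2)) = 0 := by
  have key : ∀ (Q : ℕ → Prop) (_ : DecidablePred Q),
      (∀ i : Fin n, gvec n m t i = if Q i.val then 1 else 0) →
      gvec n m t ⬝ᵥ (fun _ => (1 : ZMod 2)) = (((Finset.range n).filter Q).card : ZMod 2) := by
    intro Q hQ hgv
    unfold dotProduct
    simp only [mul_one, hgv]
    rw [Finset.sum_boole, ← card_filter_val Q]
  rcases Nat.lt_or_ge t 2 with ht2 | ht2
  · interval_cases t
    · -- t = 0
      rw [key (fun k => k ≤ 1) inferInstance (fun i => by simp [gvec])]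
      have : (Finset.range n).filter (fun k => k ≤ 1) = {0, 1} := by
        ext x
        simp only [Finset.mem_filter, Finset.mem_range, Finset.mem_insert, Finset.mem_singleton]
        omega
      rw [this]
      decide
    · -- t = 1
      rw [key (fun k => k = 0 ∨ (2 ≤ k ∧ k ≤ m)) inferInstance (fun i => by simp [gvec])]
      have hfe : (Finset.range n).filter (fun k => k = 0 ∨ (2 ≤ k ∧ k ≤ m))
          = insert 0 (Finset.Ico 2 (m + 1)) := by
        ext x
        simp only [Finset.mem_filter, Finset.mem_range, Finset.mem_insert, Finset.mem_Ico]
        omega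
      rw [hfe, Finset.card_insert_of_notMem (by simp), Nat.card_Ico]
      obtain ⟨j, hj⟩ := Nat.dvd_of_mod_eq_zero hme
      have : m + 1 - 2 + 1 = 2 * j := by omega
      rw [this]
      push_cast
      rw [show ((2 : ZMod 2)) = 0 from rfl]
      ring
  · -- 2 ≤ t
    rw [key (fun k => k = t ∨ k + t = n + 1) inferInstance (fun i => by
      simp only [gvec]
      split_ifs <;> first | rfl | (exfalso; omega))]
    have : (Finset.range n).filter (fun k => k = t ∨ k + t = n + 1) = {t, n + 1 - t} := by
      ext x
      simp only [Finset.mem_filter, Finset.mem_range, Finset.mem_insert, Finset.mem_singleton]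
      omega
    rw [this, Finset.card_insert_of_notMem (by simp; omega), Finset.card_singleton]
    decide

end dots

section walk
variable {n : ℕ} (m : ℕ)

lemma gdot_walk (hnm : n = 2 * m) (hm2 : 2 ≤ m) (hme : m % 2 = 0) :
    ∀ (k t : ℕ), t ≤ m →
      gvec n m t ⬝ᵥ ((dynkinAdj (ZMod 2) n ^ k) *ᵥ fun _ => (1 : ZMod 2)) = 0 := by
  intro k
  induction k with
  | zero =>
    intro t ht
    simpa [Matrix.one_mulVec] using gdot m t hnm hm2 hme ht
  | succ k ih =>
    intro t ht
    rw [pow_succ', ← Matrix.mulVec_mulVec, Matrix.dotProduct_mulVec]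
    have hsym : gvec n m t ᵥ* dynkinAdj (ZMod 2) n = dynkinAdj (ZMod 2) n *ᵥ gvec n m t := by
      conv_lhs => rw [← dynkin_symm n]
      rw [Matrix.vecMul_transpose]
    rw [hsym]
    by_cases h0 : t = 0
    · subst h0; rw [rel0 m hnm hm2]; simp
    by_cases h1 : t = 1
    · subst h1; rw [rel1 m hnm hm2, add_dotProduct, ih 0 (by omega), ih m le_rfl]; simp
    by_cases h2 : t = 2
    · subst h2
      by_cases hm2' : m = 2
      · rw [rel2a m hnm hm2', add_dotProduct, ih 0 (by omega), ih 2 (by omega)]; simp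
      · rw [rel2b m hnm (by omega), add_dotProduct, ih 0 (by omega), ih 3 (by omega)]
        simp
    by_cases hmt : t = m
    · rw [hmt, relm m hnm (by omega), add_dotProduct, ih (m - 1) (by omega), ih m le_rfl]
      simp
    · rw [relt m t hnm (by omega) (by omega), add_dotProduct,
        ih (t - 1) (by omega), ih (t + 1) (by omega)]
      simp

lemma gindep (hnm : n = 2 * m) (hm2 : 2 ≤ m) :
    LinearIndependent (ZMod 2) (fun t : Fin (m + 1) => gvec n m t.val) := by
  have hn4 : 4 ≤ n := by omega
  rw [Fintype.linearIndependent_iff]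
  intro c hc
  have hc' : ∀ i : Fin n, (∑ t : Fin (m + 1), c t * gvec n m t.val i) = 0 := by
    intro i
    have := congrFun hc i
    simpa [Finset.sum_apply] using this
  have h0 : c ⟨0, by omega⟩ = 0 := by
    have hco := hc' ⟨1, by omega⟩
    rw [Finset.sum_eq_single (⟨0, by omega⟩ : Fin (m + 1))] at hco
    · simpa [gvec] using hco
    · intro t _ hne
      have htv : t.val ≠ 0 := fun h => hne (Fin.ext h)
      have htm : t.val ≤ m := by have := t.isLt; omega
      have : gvec n m t.val ⟨1, by omega⟩ = 0 := by
        rw [gvec_apply m t.val 1 hnm hm2 htm (by omega)]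
        split_ifs <;> first | rfl | (exfalso; omega) | (exfalso; first | assumption | (simp only [false_or, or_false, true_or, or_true, not_true, not_false_eq_true, false_and, and_false, and_true, true_and] at *) <;> omega)
      rw [this, mul_zero]
    · intro h; exact absurd (Finset.mem_univ _) h
  have h2 : ∀ t0 : Fin (m + 1), 2 ≤ t0.val → c t0 = 0 := by
    intro t0 ht0
    have ht0m : t0.val ≤ m := by omega
    have hco := hc' ⟨n + 1 - t0.val, by omega⟩
    rw [Finset.sum_eq_single t0] at hco
    · have : gvec n m t0.val ⟨n + 1 - t0.val, by omega⟩ = 1 := by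
        simp only [gvec]
        split_ifs <;> first | rfl | (exfalso; omega)
      rw [this, mul_one] at hco
      exact hco
    · intro t _ hne
      have htv : t.val ≠ t0.val := fun h => hne (Fin.ext h)
      have htm : t.val ≤ m := by have := t.isLt; omega
      have : gvec n m t.val ⟨n + 1 - t0.val, by omega⟩ = 0 := by
        rw [gvec_apply m t.val _ hnm hm2 htm (by omega)]
        split_ifs <;> first | rfl | (exfalso; omega) | (exfalso; first | assumption | (simp only [false_or, or_false, true_or, or_true, not_true, not_false_eq_true, false_and, and_false, and_true, true_and] at *) <;> omega)
      rw [this, mul_zero]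
    · intro h; exact absurd (Finset.mem_univ _) h
  have h1 : c ⟨1, by omega⟩ = 0 := by
    have hco := hc' ⟨0, by omega⟩
    rw [Finset.sum_eq_single (⟨1, by omega⟩ : Fin (m + 1))] at hco
    · simpa [gvec] using hco
    · intro t _ hne
      have htv : t.val ≠ 1 := fun h => hne (Fin.ext h)
      by_cases ht : t.val = 0
      · have : t = ⟨0, by omega⟩ := Fin.ext ht
        rw [this, h0, zero_mul]
      · rw [h2 t (by omega), zero_mul]
    · intro h; exact absurd (Finset.mem_univ _) h
  intro t
  by_cases ht : t.val = 0
  · have : t = ⟨0, by omega⟩ := Fin.ext ht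
    rw [this]; exact h0
  by_cases ht1 : t.val = 1
  · have : t = ⟨1, by omega⟩ := Fin.ext ht1
    rw [this]; exact h1
  · exact h2 t (by omega)

end walk

theorem stmt11 (n : ℕ) (hn : 4 ≤ n) (h4 : n % 4 = 0) :
    (walkMatrix (dynkinAdj (ZMod 2) n)).rank ≤ n / 2 - 1 := by
  obtain ⟨m, hm2, hme, hnm⟩ : ∃ m, 2 ≤ m ∧ m % 2 = 0 ∧ n = 2 * m :=
    ⟨n / 2, by omega, by omega, by omega⟩
  set W := walkMatrix (dynkinAdj (ZMod 2) n) with hW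
  have hmem : ∀ t : Fin (m + 1), gvec n m t.val ∈ LinearMap.ker (Wᵀ).mulVecLin := by
    intro t
    rw [LinearMap.mem_ker]
    funext k
    rw [Matrix.mulVecLin_apply]
    show (Wᵀ *ᵥ gvec n m t.val) k = 0
    have hstep : (Wᵀ *ᵥ gvec n m t.val) k
        = gvec n m t.val ⬝ᵥ ((dynkinAdj (ZMod 2) n ^ (k : ℕ)) *ᵥ fun _ => (1 : ZMod 2)) := by
      simp only [Matrix.mulVec, dotProduct, Matrix.transpose_apply, hW, walkMatrix,
        Matrix.of_apply]
      exact Finset.sum_congr rfl fun i _ => mul_comm _ _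
    rw [hstep]
    exact gdot_walk m hnm hm2 hme k t.val (by have := t.isLt; omega)
  have hind : LinearIndependent (ZMod 2)
      (fun t : Fin (m + 1) => (⟨gvec n m t.val, hmem t⟩ : LinearMap.ker (Wᵀ).mulVecLin)) := by
    apply LinearIndependent.of_comp (LinearMap.ker (Wᵀ).mulVecLin).subtype
    exact gindep m hnm hm2
  have hcard : m + 1 ≤ Module.finrank (ZMod 2) (LinearMap.ker (Wᵀ).mulVecLin) := by
    simpa using hind.fintype_card_le_finrank
  have hrn := LinearMap.finrank_range_add_finrank_ker (Wᵀ).mulVecLin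
  have hdom : Module.finrank (ZMod 2) (Fin n → ZMod 2) = n := by
    simp [Module.finrank_pi]
  rw [hdom] at hrn
  have htr : W.rank = (Wᵀ).rank := (Matrix.rank_transpose W).symm
  have hreq : (Wᵀ).rank = Module.finrank (ZMod 2) (LinearMap.range (Wᵀ).mulVecLin) := rfl
  omega
end

section
/- For any graph G on n vertices, the rank over 𝔽₂ of the walk matrix W(G) = [e, Ae, …, A^{n-1}e] is at most ⌈n/2⌉. -/
open Matrix

private lemma zmod2_mul_self (x : ZMod 2) : x * x = x := by revert x; decide

private lemma zmod2_add_self (x : ZMod 2) : x + x = 0 := by revert x; decide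

private lemma symm_dot {n : ℕ} (M : Matrix (Fin n) (Fin n) (ZMod 2)) (h : Mᵀ = M)
    (x y : Fin n → ZMod 2) : (M *ᵥ x) ⬝ᵥ y = x ⬝ᵥ (M *ᵥ y) := by
  rw [← h, mulVec_transpose, ← dotProduct_mulVec, h]

private lemma dot_adj_self {n : ℕ} (G : SimpleGraph (Fin n)) [DecidableRel G.Adj]
    (v : Fin n → ZMod 2) : v ⬝ᵥ ((G.adjMatrix (ZMod 2)) *ᵥ v) = 0 := by
  classical
  set A := G.adjMatrix (ZMod 2) with hA
  have key : v ⬝ᵥ (A *ᵥ v) = ∑ p : Fin n × Fin n, v p.1 * (A p.1 p.2 * v p.2) := by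
    simp [dotProduct, mulVec, Finset.mul_sum, ← Finset.sum_product', Finset.univ_product_univ]
  rw [key]
  apply Finset.sum_ninvolution (fun p => (p.2, p.1))
  · intro p
    have hsym : A p.2 p.1 = A p.1 p.2 := by simp [hA, G.adj_comm]
    have : v p.2 * (A p.2 p.1 * v p.1) = v p.1 * (A p.1 p.2 * v p.2) := by
      rw [hsym]; ring
    simp only [this]
    exact zmod2_add_self _
  · intro p hp hgp
    apply hp
    have h1 : p.2 = p.1 := congrArg Prod.fst hgp
    have : A p.1 p.2 = 0 := by rw [← h1] at *; rw [h1]; simp [hA]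
    rw [this]; ring
  · intro p; exact Finset.mem_univ _
  · intro p; rfl

private lemma dot_sq {n : ℕ} (v : Fin n → ZMod 2) :
    v ⬝ᵥ v = (fun _ => (1 : ZMod 2)) ⬝ᵥ v := by
  simp [dotProduct, zmod2_mul_self]

private lemma walk_dot_zero {n : ℕ} (G : SimpleGraph (Fin n)) [DecidableRel G.Adj]
    (m : ℕ) (hm : 1 ≤ m) :
    (fun _ => (1 : ZMod 2)) ⬝ᵥ ((G.adjMatrix (ZMod 2)) ^ m *ᵥ (fun _ => 1)) = 0 := by
  set A := G.adjMatrix (ZMod 2) with hA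
  have hsym : ∀ k : ℕ, (A ^ k)ᵀ = A ^ k := by
    intro k; rw [transpose_pow, show Aᵀ = A from G.transpose_adjMatrix]
  induction m using Nat.strong_induction_on with
  | _ m ih =>
    rcases Nat.even_or_odd m with ⟨s, hs⟩ | ⟨s, hs⟩
    · have hs1 : 1 ≤ s := by omega
      have hpow : A ^ m = A ^ s * A ^ s := by rw [← pow_add, show s + s = m from by omega]
      rw [hpow, ← mulVec_mulVec, ← symm_dot _ (hsym s), dot_sq]
      exact ih s (by omega) hs1
    · have hpow : A ^ m = A ^ s * A ^ (s + 1) := by rw [← pow_add, show s + (s + 1) = m from by omega]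
      rw [hpow, ← mulVec_mulVec, ← symm_dot _ (hsym s), pow_succ', ← mulVec_mulVec]
      exact dot_adj_self G _

private lemma sylvester {K : Type*} [Field K] {U V W : Type*} [AddCommGroup U] [Module K U]
    [AddCommGroup V] [Module K V] [FiniteDimensional K V]
    [AddCommGroup W] [Module K W]
    (f : V →ₗ[K] W) (g : U →ₗ[K] V) :
    Module.finrank K (LinearMap.range g) ≤
      Module.finrank K (LinearMap.range (f ∘ₗ g)) + Module.finrank K (LinearMap.ker f) := by
  have h1 := LinearMap.finrank_range_add_finrank_ker (f.domRestrict (LinearMap.range g))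
  rw [LinearMap.range_domRestrict, LinearMap.ker_domRestrict] at h1
  have h2 : Module.finrank K (Submodule.comap (LinearMap.range g).subtype (LinearMap.ker f))
      ≤ Module.finrank K (LinearMap.ker f) := by
    rw [← Submodule.finrank_map_subtype_eq, Submodule.map_comap_subtype]
    exact Submodule.finrank_mono inf_le_right
  have h3 : Submodule.map f (LinearMap.range g) = LinearMap.range (f ∘ₗ g) :=
    (LinearMap.range_comp _ _).symm
  rw [h3] at h1
  omega

private lemma WtW {n : ℕ} (G : SimpleGraph (Fin n)) [DecidableRel G.Adj] :
    (walkMatrix (G.adjMatrix (ZMod 2)))ᵀ * walkMatrix (G.adjMatrix (ZMod 2)) =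
      vecMulVec (fun i : Fin n => if (i : ℕ) = 0 then (n : ZMod 2) else 0)
        (fun j : Fin n => if (j : ℕ) = 0 then 1 else 0) := by
  set A := G.adjMatrix (ZMod 2) with hA
  have hsym : ∀ k : ℕ, (A ^ k)ᵀ = A ^ k := by
    intro k; rw [transpose_pow, show Aᵀ = A from G.transpose_adjMatrix]
  ext i j
  have lhs : ((walkMatrix A)ᵀ * walkMatrix A) i j
      = (A ^ (i : ℕ) *ᵥ (fun _ => 1)) ⬝ᵥ (A ^ (j : ℕ) *ᵥ (fun _ => 1)) := by
    simp [mul_apply, walkMatrix, dotProduct]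
  rw [lhs, symm_dot _ (hsym _), mulVec_mulVec, ← pow_add]
  rcases Nat.eq_zero_or_pos ((i : ℕ) + (j : ℕ)) with h0 | h1
  · have hi : (i : ℕ) = 0 := by omega
    have hj : (j : ℕ) = 0 := by omega
    rw [h0]
    simp [vecMulVec_apply, hi, hj, dotProduct, Finset.card_univ]
  · have := walk_dot_zero G _ h1
    rw [this]
    have : ¬((i : ℕ) = 0 ∧ (j : ℕ) = 0) := by omega
    simp only [vecMulVec_apply]
    rcases Nat.eq_zero_or_pos (i : ℕ) with hi | hi
    · have hj : (j : ℕ) ≠ 0 := by omega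
      simp [hi, hj]
    · simp [Nat.pos_iff_ne_zero.mp hi]

theorem stmt12 (n : ℕ) (G : SimpleGraph (Fin n)) [DecidableRel G.Adj] :
    (walkMatrix (G.adjMatrix (ZMod 2))).rank ≤ (n + 1) / 2 := by
  classical
  set W := walkMatrix (G.adjMatrix (ZMod 2)) with hW
  -- Sylvester: 2 * rank W ≤ n + rank (Wᵀ * W)
  have hs := sylvester (Wᵀ.mulVecLin) (W.mulVecLin)
  rw [← Matrix.mulVecLin_mul] at hs
  have hker : Module.finrank (ZMod 2) (LinearMap.ker (Wᵀ.mulVecLin))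
      + Wᵀ.rank = n := by
    have := LinearMap.finrank_range_add_finrank_ker (Wᵀ.mulVecLin)
    rw [Module.finrank_fintype_fun_eq_card, Fintype.card_fin] at this
    rw [Matrix.rank]
    omega
  rw [Matrix.rank_transpose] at hker
  have hsyl : W.rank + W.rank ≤ (Wᵀ * W).rank + n := by
    have e1 : W.rank = Module.finrank (ZMod 2) (LinearMap.range W.mulVecLin) := rfl
    have e2 : (Wᵀ * W).rank
        = Module.finrank (ZMod 2) (LinearMap.range (Wᵀ * W).mulVecLin) := rfl
    omega
  -- rank of Wᵀ * W
  have hWtW := WtW G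
  have hrk1 : (Wᵀ * W).rank ≤ 1 := by
    rw [hWtW, vecMulVec_eq Unit]
    refine le_trans (Matrix.rank_mul_le_left _ _) ?_
    simpa using Matrix.rank_le_card_width
      (Matrix.replicateCol Unit (fun i : Fin n => if (i : ℕ) = 0 then (n : ZMod 2) else 0))
  rcases Nat.even_or_odd n with he | ho
  · have hzero : (Wᵀ * W).rank = 0 := by
      have : ((n : ℕ) : ZMod 2) = 0 := by
        obtain ⟨k, hk⟩ := he
        push_cast [hk]
        ring_nf
        rw [show (2 : ZMod 2) = 0 by decide]
        ring
      rw [hWtW]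
      have : (vecMulVec (fun i : Fin n => if (i : ℕ) = 0 then (n : ZMod 2) else 0)
          (fun j : Fin n => if (j : ℕ) = 0 then 1 else 0)) = 0 := by
        ext i j
        simp only [vecMulVec_apply, this]
        split <;> simp
      rw [this, Matrix.rank_zero]
    obtain ⟨k, hk⟩ := he
    omega
  · obtain ⟨k, hk⟩ := ho
    omega
end

section
/- With notation as in the eigenvector construction for the matrix B associated with D_n (n ≡ 0 mod 4, n ≥ 8): for each k ∈ {1,…,n−1}\{n/2} with α_k = (2k−1)π/(2(n−1)), letting a_m = 1 + Σ_{t=1}^{m−1} 2cos(4tα_k) and c_m = Σ_{t=0}^{m−1} 2cos((4t+2)α_k) with m = n/4, one has c_m = a_m. -/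
/-!
Multiplying by `sin 2α` telescopes both sums, since `2 cos θ sin 2α = sin (θ + 2α) - sin (θ - 2α)`:
`c_m sin 2α = sin 4mα` and `a_m sin 2α = sin (4m-2)α`. The two angles add up to `(2k-1)π`, an odd
multiple of `π`, so their sines agree. Finally `sin 2α = sin ((2k-1)π/(n-1)) ≠ 0`, because
`n - 1 ∤ 2k - 1` for `1 ≤ k ≤ n - 1`, `k ≠ n/2`.
-/

/-- The angle `α_k = (2k-1)π/(2(n-1))`. -/
noncomputable def alphaAng (n k : ℕ) : ℝ := (2 * (k : ℝ) - 1) * Real.pi / (2 * ((n : ℝ) - 1))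

open Real Finset

theorem two_mul_cos_mul_sin (a x : ℝ) : 2 * cos a * sin x = sin (a + x) - sin (a - x) := by
  rw [sin_add, sin_sub]
  ring

theorem sum_range_two_mul_cos_mul_sin_two_mul (α : ℝ) (m : ℕ) :
    (∑ t ∈ range m, 2 * cos ((4 * t + 2) * α)) * sin (2 * α) = sin (4 * m * α) := by
  induction m with
  | zero => simp
  | succ m ih =>
    rw [sum_range_succ, add_mul, ih, two_mul_cos_mul_sin]
    push_cast
    ring_nf

theorem one_add_sum_Icc_two_mul_cos_mul_sin_two_mul (α : ℝ) (j : ℕ) :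
    (1 + ∑ t ∈ Icc 1 j, 2 * cos (4 * t * α)) * sin (2 * α) = sin ((4 * j + 2) * α) := by
  induction j with
  | zero => simp
  | succ j ih =>
    rw [sum_Icc_succ_top (by omega), ← add_assoc, add_mul, ih, two_mul_cos_mul_sin]
    push_cast
    ring_nf

theorem sin_eq_sin_of_add_eq_odd_mul_pi {a b : ℝ} (j : ℤ) (h : a + b = (2 * j + 1) * π) :
    sin a = sin b := by
  rw [show a = π - b + j * (2 * π) by linear_combination h, sin_add_int_mul_two_pi, sin_pi_sub]

theorem sin_int_mul_pi_div_eq_zero_iff {N : ℤ} (hN : N ≠ 0) (j : ℤ) :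
    sin (j * π / N) = 0 ↔ N ∣ j := by
  have hN' : (N : ℝ) ≠ 0 := Int.cast_ne_zero.mpr hN
  rw [sin_eq_zero_iff]
  constructor
  · rintro ⟨q, hq⟩
    field_simp at hq
    exact ⟨q, by exact_mod_cast (by linear_combination -hq : (j : ℝ) = N * q)⟩
  · rintro ⟨q, rfl⟩
    exact ⟨q, by push_cast; field_simp⟩

theorem sin_mul_alphaAng_eq_of_add_eq {n : ℕ} (k : ℕ) (hn : n ≠ 1) {a b : ℝ}
    (hab : a + b = 2 * (n - 1)) : sin (a * alphaAng n k) = sin (b * alphaAng n k) := by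
  have hn' : (n : ℝ) - 1 ≠ 0 := sub_ne_zero.mpr (by exact_mod_cast hn)
  refine sin_eq_sin_of_add_eq_odd_mul_pi (k - 1) ?_
  rw [← add_mul, hab, alphaAng]
  push_cast
  field_simp
  ring

theorem sin_two_mul_alphaAng_ne_zero {n k : ℕ} (hk1 : 1 ≤ k) (hk2 : k ≤ n - 1) (hkn : 2 * k ≠ n) :
    sin (2 * alphaAng n k) ≠ 0 := by
  have hx : 2 * alphaAng n k = ((2 * k - 1 : ℤ) : ℝ) * π / (n - 1 : ℤ) := by
    have hn' : (n : ℝ) - 1 ≠ 0 := sub_ne_zero.mpr (by norm_cast; omega)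
    rw [alphaAng]
    push_cast
    field_simp
  rw [hx, ne_eq, sin_int_mul_pi_div_eq_zero_iff (by omega)]
  -- `n - 1 ∣ 2k - 1` would give `n - 1 ∣ 2k - n`, and `|2k - n| < n - 1`.
  intro hdvd
  have := Int.eq_zero_of_abs_lt_dvd (dvd_sub hdvd dvd_rfl) (abs_lt.mpr ⟨by omega, by omega⟩)
  omega

theorem stmt15_general (n k : ℕ) (h4 : n % 4 = 0)
    (hk1 : 1 ≤ k) (hk2 : k ≤ n - 1) (hkm : k ≠ n / 2) :
    ∑ t ∈ Finset.range (n / 4), 2 * Real.cos ((4 * (t : ℝ) + 2) * alphaAng n k)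
      = 1 + ∑ t ∈ Finset.Icc 1 (n / 4 - 1), 2 * Real.cos (4 * (t : ℝ) * alphaAng n k) := by
  set m := n / 4
  have hm : 1 ≤ m := by omega
  have hn : (n : ℝ) = 4 * m := by exact_mod_cast (by omega : n = 4 * m)
  apply mul_right_cancel₀ (sin_two_mul_alphaAng_ne_zero hk1 hk2 (by omega))
  rw [sum_range_two_mul_cos_mul_sin_two_mul, one_add_sum_Icc_two_mul_cos_mul_sin_two_mul]
  apply sin_mul_alphaAng_eq_of_add_eq k (by omega)
  push_cast [hm, hn]
  ring

theorem stmt15 (n k : ℕ) (h4 : n % 4 = 0) (h8 : 8 ≤ n)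
    (hk1 : 1 ≤ k) (hk2 : k ≤ n - 1) (hkm : k ≠ n / 2) :
    ∑ t ∈ Finset.range (n / 4), 2 * Real.cos ((4 * (t : ℝ) + 2) * alphaAng n k)
      = 1 + ∑ t ∈ Finset.Icc 1 (n / 4 - 1), 2 * Real.cos (4 * (t : ℝ) * alphaAng n k) :=
  stmt15_general n k h4 hk1 hk2 hkm
end
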